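/- arXiv:2310.08454 — 4 statements merged into one kernel-verified Lean document; each statement's English description precedes it below -/
import Mathlib

section
/- For an M-convex set B_i with rank function ρ_i, a point z_i ∈ B_i, and items e, f ∈ E, the maximal exchange weight w_i(e,f) := max{α ∈ Z : z_i − αχ_f + αχ_e ∈ B_i} equals min{ρ_i(S) − z_i(S) : S ⊆ E, e ∈ S, f ∉ S}. -/
open Finset

variable {E : Type*} [Fintype E] [DecidableEq E]

/-- Characteristic (unit) vector of an item. -/
def chi (e : E) : E → ℤ := fun f => if f = e then 1 else 0

/-- The integer box `[0, b]_ℤ`. -/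
def Box (b : E → ℤ) : Set (E → ℤ) := {z | ∀ e, 0 ≤ z e ∧ z e ≤ b e}

/-- M-convex set: exchange property. -/
def MConvex (B : Set (E → ℤ)) : Prop :=
  ∀ x ∈ B, ∀ y ∈ B, ∀ e : E, y e < x e →
    ∃ f : E, x f < y f ∧ x - chi e + chi f ∈ B ∧ y + chi e - chi f ∈ B

/-- `ρ` is the rank function of `B`: `ρ S = max {z(S) : z ∈ B}`. -/
def IsRank (B : Set (E → ℤ)) (ρ : Finset E → ℤ) : Prop :=
  ∀ S : Finset E, IsGreatest ((fun z : E → ℤ => ∑ e ∈ S, z e) '' B) (ρ S)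

/-- A set `S` is tight for `z` if `z(S) = ρ S`. -/
def Tight (ρ : Finset E → ℤ) (z : E → ℤ) (S : Finset E) : Prop :=
  ∑ e ∈ S, z e = ρ S

/-!
Put `x = z - wχ_f + wχ_e ∈ B`. Every `T` with `e ∈ T`, `f ∉ T` has `ρ T ≥ x(T) = z(T) + w`, so `w` is a
lower bound. For equality take `S = {g : x + χ_g - χ_f ∉ B}`, which contains `e` by maximality of `w`
and omits `f`. Exchangeability `g → h` (`x + χ_g - χ_h ∈ B`) is transitive, so no exchange leaves `S`,
and an M-convex set has no point beating `x` on such a set: `ρ S = x(S)`.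
-/

section

omit [Fintype E]

lemma sum_chi (S : Finset E) (g : E) : ∑ k ∈ S, chi g k = if g ∈ S then 1 else 0 := by
  simp [chi]

lemma sum_sub_smul_chi_add_smul_chi {S : Finset E} {e f : E} (he : e ∈ S) (hf : f ∉ S)
    (z : E → ℤ) (α : ℤ) : ∑ g ∈ S, (z - α • chi f + α • chi e) g = ∑ g ∈ S, z g + α := by
  simp only [Pi.add_apply, Pi.sub_apply, Pi.smul_apply, smul_eq_mul, sum_add_distrib,
    sum_sub_distrib, ← mul_sum, sum_chi, if_pos he, if_neg hf]
  ring

lemma MConvex.add_chi_sub_chi_mem_trans {B : Set (E → ℤ)} (hM : MConvex B) {x : E → ℤ}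
    {g h f : E} (hgh : g ≠ h) (hxgh : x + chi g - chi h ∈ B) (hxhf : x + chi h - chi f ∈ B) :
    x + chi g - chi f ∈ B := by
  have hlt : (x + chi h - chi f) g < (x + chi g - chi h) g := by
    simp only [Pi.add_apply, Pi.sub_apply, chi, if_pos, if_neg hgh]
    split_ifs <;> omega
  obtain ⟨k, hk, -, hmem⟩ := hM _ hxgh _ hxhf g hlt
  -- `h` is the only coordinate where `x + χ_g - χ_h` lies below `x + χ_h - χ_f`.
  obtain rfl : k = h := by
    by_contra hkh
    simp only [Pi.add_apply, Pi.sub_apply, chi, if_neg hkh] at hk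
    split_ifs at hk <;> omega
  convert hmem using 1
  abel

end

lemma sum_natAbs_sub_chi_add_chi_lt {x y : E → ℤ} {g h : E} (hg : x g < y g) (hh : y h < x h) :
    ∑ k, ((y - chi g + chi h) k - x k).natAbs < ∑ k, (y k - x k).natAbs := by
  have hgh : g ≠ h := by rintro rfl; omega
  refine sum_lt_sum (fun k _ => ?_) ⟨g, mem_univ g, ?_⟩
  · simp only [Pi.add_apply, Pi.sub_apply, chi]
    split_ifs <;> subst_vars <;> omega
  · simp only [Pi.add_apply, Pi.sub_apply, chi, if_pos, if_neg hgh]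
    omega

-- Induction on `‖y - x‖₁`: an exchange of `y` towards `x` must stay inside `S`, so it keeps `y(S)`.
lemma MConvex.sum_le_of_forall_add_chi_sub_chi_notMem {B : Set (E → ℤ)} (hM : MConvex B)
    {x : E → ℤ} (hx : x ∈ B) {S : Finset E}
    (hS : ∀ g ∈ S, ∀ h ∉ S, x + chi g - chi h ∉ B) {y : E → ℤ} (hy : y ∈ B) :
    ∑ g ∈ S, y g ≤ ∑ g ∈ S, x g := by
  induction hd : ∑ k, (y k - x k).natAbs using Nat.strong_induction_on generalizing y with
  | _ d ih =>
  by_contra! hlt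
  obtain ⟨g, hgS, hxy⟩ : ∃ g ∈ S, x g < y g := by
    by_contra! hle
    exact (sum_le_sum hle).not_gt hlt
  obtain ⟨h, hyx, hy', hx'⟩ := hM y hy x hx g hxy
  have hhS : h ∈ S := by_contra fun hhS => hS g hgS h hhS hx'
  have hsum : ∑ k ∈ S, (y - chi g + chi h) k = ∑ k ∈ S, y k := by
    simp only [Pi.add_apply, Pi.sub_apply, sum_add_distrib, sum_sub_distrib, sum_chi,
      if_pos hgS, if_pos hhS]
    ring
  have := ih _ (hd ▸ sum_natAbs_sub_chi_add_chi_lt hxy hyx) hy' rfl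
  omega

theorem stmt1_general (B : Set (E → ℤ)) (hM : MConvex B)
    (ρ : Finset E → ℤ) (hρ : IsRank B ρ) (z : E → ℤ)
    (e f : E) (w : ℤ)
    (hw : IsGreatest {α : ℤ | z - α • chi f + α • chi e ∈ B} w) :
    IsLeast {d : ℤ | ∃ S : Finset E, e ∈ S ∧ f ∉ S ∧ d = ρ S - ∑ g ∈ S, z g} w := by
  classical
  set x := z - w • chi f + w • chi e
  have hx : x ∈ B := hw.1
  have hef : x + chi e - chi f ∉ B := fun hmem => by
    have : w + 1 ≤ w := hw.2 (show z - (w + 1) • chi f + (w + 1) • chi e ∈ B by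
      convert hmem using 1; simp only [x, add_smul, one_smul]; abel)
    omega
  set S := univ.filter fun g => x + chi g - chi f ∉ B
  have heS : e ∈ S := by simpa [S] using hef
  have hfS : f ∉ S := by simpa [S] using hx
  have hS : ∀ g ∈ S, ∀ h ∉ S, x + chi g - chi h ∉ B := by
    intro g hg h hh hgh
    simp only [S, mem_filter, mem_univ, true_and, not_not] at hg hh
    exact hg (hM.add_chi_sub_chi_mem_trans (by rintro rfl; exact hg hh) hgh hh)
  have hρS : ρ S = ∑ g ∈ S, x g := by
    obtain ⟨⟨y, hy, hyS⟩, hle⟩ := hρ S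
    exact le_antisymm (hyS ▸ hM.sum_le_of_forall_add_chi_sub_chi_notMem hx hS hy) (hle ⟨x, hx, rfl⟩)
  refine ⟨⟨S, heS, hfS, ?_⟩, ?_⟩
  · rw [hρS, sum_sub_smul_chi_add_smul_chi heS hfS]; ring
  · rintro d ⟨T, heT, hfT, rfl⟩
    have : ∑ g ∈ T, x g ≤ ρ T := (hρ T).2 ⟨x, hx, rfl⟩
    rw [sum_sub_smul_chi_add_smul_chi heT hfT] at this
    omega

/-- The maximal exchange weight `w(e,f) = max {α : z − αχ_f + αχ_e ∈ B}` equals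
`min {ρ S − z(S) : e ∈ S, f ∉ S}`. -/
theorem stmt1 (b : E → ℤ) (B : Set (E → ℤ)) (hBox : B ⊆ Box b) (hM : MConvex B)
    (ρ : Finset E → ℤ) (hρ : IsRank B ρ) (z : E → ℤ) (hz : z ∈ B)
    (e f : E) (hef : e ≠ f) (w : ℤ)
    (hw : IsGreatest {α : ℤ | z - α • chi f + α • chi e ∈ B} w) :
    IsLeast {d : ℤ | ∃ S : Finset E, e ∈ S ∧ f ∉ S ∧ d = ρ S - ∑ g ∈ S, z g} w :=
  stmt1_general B hM ρ hρ z e f w hw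
end

section
/- (Weak duality and complementary slackness for polymatroid sum) For M-convex sets B_1,…,B_n ⊆ [0,b]_Z with rank functions ρ_i, any tuple z = (z_1,…,z_n) with z_i ∈ B_i, and any S ⊆ E, we have Σ_{e∈E} min{Σ_i z_i(e), b(e)} ≤ Σ_i ρ_i(E∖S) + b(S), with equality if and only if: (1) Σ_i z_i(e) ≥ b(e) for all e ∈ S, (2) Σ_i z_i(e) ≤ b(e) for all e ∈ E∖S, and (3) z_i(E∖S) = ρ_i(E∖S) for all i. -/
open Finset

variable {E : Type*} [Fintype E] [DecidableEq E]

/-!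
Split `E` into `S` and `Sᶜ`. On `S` each term `min (∑ i, z i e) (b e)` is at most `b e`; on `Sᶜ`
it is at most `∑ i, z i e`, and after exchanging the sums, `z_i(Sᶜ) ≤ ρ_i(Sᶜ)` because `ρ_i(Sᶜ)` is
the maximum of `x(Sᶜ)` over `x ∈ B i`. Equality holds iff each of these bounds is attained.
-/

lemma IsRank.sum_le {ι : Type*} {B : Set (ι → ℤ)} {ρ : Finset ι → ℤ} (hρ : IsRank B ρ)
    {x : ι → ℤ} (hx : x ∈ B) (T : Finset ι) : ∑ e ∈ T, x e ≤ ρ T :=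
  (hρ T).2 ⟨x, hx, rfl⟩

lemma eq_iff_eq_and_eq_of_le_of_le {α : Type*} [PartialOrder α] {a m c : α} (ham : a ≤ m)
    (hmc : m ≤ c) : a = c ↔ a = m ∧ m = c := by
  constructor
  · rintro rfl
    exact ⟨le_antisymm ham hmc, le_antisymm hmc ham⟩
  · rintro ⟨rfl, rfl⟩
    rfl

section MinSum

variable {α : Type*} [AddCommMonoid α] [LinearOrder α] [IsOrderedCancelAddMonoid α]

lemma sum_min_le_sum_add_sum_compl (x b : E → α) (S : Finset E) :
    ∑ e, min (x e) (b e) ≤ ∑ e ∈ S, b e + ∑ e ∈ Sᶜ, x e := by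
  rw [← sum_add_sum_compl S]
  exact add_le_add (sum_le_sum fun e _ => min_le_right _ _)
    (sum_le_sum fun e _ => min_le_left _ _)

lemma sum_min_eq_sum_add_sum_compl_iff (x b : E → α) (S : Finset E) :
    ∑ e, min (x e) (b e) = ∑ e ∈ S, b e + ∑ e ∈ Sᶜ, x e ↔
      (∀ e ∈ S, b e ≤ x e) ∧ ∀ e ∈ Sᶜ, x e ≤ b e := by
  rw [← sum_add_sum_compl S, add_eq_add_iff_eq_and_eq
      (sum_le_sum fun e _ => min_le_right _ _) (sum_le_sum fun e _ => min_le_left _ _),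
    sum_eq_sum_iff_of_le (fun e _ => min_le_right _ _),
    sum_eq_sum_iff_of_le (fun e _ => min_le_left _ _)]
  simp only [min_eq_right_iff, min_eq_left_iff]

end MinSum

theorem stmt3_general {N : Type*} [Fintype N] (b : E → ℤ) (B : N → Set (E → ℤ))
    (ρ : N → Finset E → ℤ) (hρ : ∀ i, IsRank (B i) (ρ i))
    (z : N → E → ℤ) (hz : ∀ i, z i ∈ B i) (S : Finset E) :
    (∑ e : E, min (∑ i, z i e) (b e) ≤ ∑ i, ρ i Sᶜ + ∑ e ∈ S, b e) ∧
    ((∑ e : E, min (∑ i, z i e) (b e) = ∑ i, ρ i Sᶜ + ∑ e ∈ S, b e) ↔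
      ((∀ e ∈ S, b e ≤ ∑ i, z i e) ∧
       (∀ e ∈ Sᶜ, ∑ i, z i e ≤ b e) ∧
       (∀ i, ∑ e ∈ Sᶜ, z i e = ρ i Sᶜ))) := by
  have hcover := sum_min_le_sum_add_sum_compl (fun e => ∑ i, z i e) b S
  have hrank : ∑ e ∈ Sᶜ, ∑ i, z i e ≤ ∑ i, ρ i Sᶜ := by
    rw [sum_comm]
    exact sum_le_sum fun i _ => (hρ i).sum_le (hz i) Sᶜ
  have hbound := add_le_add_right hrank (∑ e ∈ S, b e)
  rw [add_comm (∑ i, ρ i Sᶜ)]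
  refine ⟨hcover.trans hbound, ?_⟩
  rw [eq_iff_eq_and_eq_of_le_of_le hcover hbound, add_right_inj,
    sum_min_eq_sum_add_sum_compl_iff, sum_comm,
    sum_eq_sum_iff_of_le fun i _ => (hρ i).sum_le (hz i) Sᶜ, and_assoc]
  simp only [mem_univ, forall_const]

/-- Weak duality and complementary slackness for polymatroid sum. -/
theorem stmt3 {N : Type*} [Fintype N] (b : E → ℤ) (B : N → Set (E → ℤ))
    (hBox : ∀ i, B i ⊆ Box b) (hM : ∀ i, MConvex (B i))
    (ρ : N → Finset E → ℤ) (hρ : ∀ i, IsRank (B i) (ρ i))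
    (z : N → E → ℤ) (hz : ∀ i, z i ∈ B i) (S : Finset E) :
    (∑ e : E, min (∑ i, z i e) (b e) ≤ ∑ i, ρ i Sᶜ + ∑ e ∈ S, b e) ∧
    ((∑ e : E, min (∑ i, z i e) (b e) = ∑ i, ρ i Sᶜ + ∑ e ∈ S, b e) ↔
      ((∀ e ∈ S, b e ≤ ∑ i, z i e) ∧
       (∀ e ∈ Sᶜ, ∑ i, z i e ≤ b e) ∧
       (∀ i, ∑ e ∈ Sᶜ, z i e = ρ i Sᶜ))) :=
  stmt3_general b B ρ hρ z hz S
end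

section
/- Given strong gross substitutes valuations, a price vector p is covering (i.e., there exist z_i ∈ D_i(p) with Σ_i z_i(e) ≥ b(e) for all e) if and only if there is no underdemanded set, i.e., b(S) ≤ Σ_i ρ̂_i(S) for all S ⊆ E, where ρ̂_i is the rank function of the M-convex set of maximal preferred bundles of buyer i at prices p. -/
/-!
Necessity: extend each chosen bundle to a maximal preferred one; on any `S` these carry at most
`Σ_i ρ̂_i(S)` units. Sufficiency: by M♮-concavity, `D̂_i(p)` is the set of preferred bundles of
maximum size and is M-convex. Choose `z_i ∈ D̂_i(p)` of minimum total deficit and suppose some item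
is undersold. If a walk of single-unit exchanges leads from an undersold item to an oversold one,
a shortest such walk has no shortcuts, so all its exchanges can be carried out at once and the
deficit drops. Otherwise the set `A` of items reachable from undersold items is closed under
exchanges, so every `z_i` maximizes `z(A)` over `D̂_i(p)` and `Σ_i ρ̂_i(A) = Σ_i z_i(A) < b(A)`.
-/

open Finset

variable {E : Type*} [Fintype E] [DecidableEq E]

/-- Quasi-linear utility of a bundle at prices `p`. -/
noncomputable def util (v : (E → ℤ) → ℤ) (p : E → ℝ) (z : E → ℤ) : ℝ :=
  (v z : ℝ) - ∑ e : E, p e * (z e : ℝ)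

/-- Demand set: utility-maximizing bundles in the box. -/
def Demand (b : E → ℤ) (v : (E → ℤ) → ℤ) (p : E → ℝ) : Set (E → ℤ) :=
  {z | z ∈ Box b ∧ ∀ y ∈ Box b, util v p y ≤ util v p z}

/-- Componentwise minimal preferred bundles. -/
def MinDemand (b : E → ℤ) (v : (E → ℤ) → ℤ) (p : E → ℝ) : Set (E → ℤ) :=
  {z | z ∈ Demand b v p ∧ ∀ y ∈ Demand b v p, y ≤ z → y = z}

/-- Componentwise maximal preferred bundles. -/
def MaxDemand (b : E → ℤ) (v : (E → ℤ) → ℤ) (p : E → ℝ) : Set (E → ℤ) :=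
  {z | z ∈ Demand b v p ∧ ∀ y ∈ Demand b v p, z ≤ y → y = z}

/-- M♮-concavity, equivalent to the strong gross substitutes property. -/
def MNatConcave (b : E → ℤ) (v : (E → ℤ) → ℤ) : Prop :=
  ∀ x ∈ Box b, ∀ y ∈ Box b, ∀ e : E, y e < x e →
    v x + v y ≤ v (x - chi e) + v (y + chi e) ∨
    ∃ f : E, x f < y f ∧ v x + v y ≤ v (x - chi e + chi f) + v (y + chi e - chi f)

/-- Prices `p` are packing: a choice of preferred bundles oversells no item. -/
def Packing {N : Type*} [Fintype N] (b : E → ℤ) (v : N → (E → ℤ) → ℤ) (p : E → ℝ) : Prop :=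
  ∃ z : N → E → ℤ, (∀ i, z i ∈ Demand b (v i) p) ∧ ∀ e, ∑ i, z i e ≤ b e

/-- Prices `p` are covering: a choice of preferred bundles sells all items. -/
def Covering {N : Type*} [Fintype N] (b : E → ℤ) (v : N → (E → ℤ) → ℤ) (p : E → ℝ) : Prop :=
  ∃ z : N → E → ℤ, (∀ i, z i ∈ Demand b (v i) p) ∧ ∀ e, b e ≤ ∑ i, z i e

/-- Prices `p` are Walrasian: a choice of preferred bundles exactly exhausts the supply. -/
def Walrasian {N : Type*} [Fintype N] (b : E → ℤ) (v : N → (E → ℤ) → ℤ) (p : E → ℝ) : Prop :=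
  ∃ z : N → E → ℤ, (∀ i, z i ∈ Demand b (v i) p) ∧ ∀ e, ∑ i, z i e = b e

section Exchange

variable {E : Type*} [DecidableEq E]

@[simp] lemma chi_self (e : E) : chi e e = 1 := if_pos rfl

lemma chi_of_ne {e f : E} (h : f ≠ e) : chi e f = 0 := if_neg h

lemma sub_chi_mem_box {b x : E → ℤ} (hx : x ∈ Box b) {e : E} (he : 0 < x e) :
    x - chi e ∈ Box b := by
  intro g
  have := hx g
  by_cases hg : g = e
  · subst hg; simp only [Pi.sub_apply, chi_self]; omega
  · simp only [Pi.sub_apply, chi_of_ne hg]; omega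

lemma add_chi_mem_box {b x : E → ℤ} (hx : x ∈ Box b) {e : E} (he : x e < b e) :
    x + chi e ∈ Box b := by
  intro g
  have := hx g
  by_cases hg : g = e
  · subst hg; simp only [Pi.add_apply, chi_self]; omega
  · simp only [Pi.add_apply, chi_of_ne hg]; omega

lemma sum_sub_chi_add_chi {S : Finset E} (x : E → ℤ) {e f : E} (he : e ∈ S) (hf : f ∈ S) :
    ∑ g ∈ S, (x - chi e + chi f) g = ∑ g ∈ S, x g := by
  simp [sum_add_distrib, sum_sub_distrib, chi, he, hf]

variable {B : Set (E → ℤ)}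

lemma MConvex.exchange_trans (hB : MConvex B) {x : E → ℤ} {a b c : E}
    (h₁ : x + chi a - chi b ∈ B) (h₂ : x + chi b - chi c ∈ B) (hab : a ≠ b) (hac : a ≠ c) :
    x + chi a - chi c ∈ B := by
  obtain ⟨f, hf, -, hmem⟩ := hB _ h₁ _ h₂ a (by simp [chi, hab, hac])
  have hfb : f = b := by
    by_contra hfb
    simp only [Pi.add_apply, Pi.sub_apply, chi, if_neg hfb] at hf
    split_ifs at hf <;> omega
  rwa [hfb, show x + chi b - chi c + chi a - chi b = x + chi a - chi c by abel] at hmem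

lemma MConvex.exchange_add_exchange (hB : MConvex B) {x : E → ℤ} {a b c d : E}
    (h₁ : x + chi a - chi b ∈ B) (h₂ : x + chi c - chi d ∈ B)
    (hab : a ≠ b) (hac : a ≠ c) (had : a ≠ d) (hnot : x + chi a - chi d ∉ B) :
    x + chi a - chi b + chi c - chi d ∈ B := by
  obtain ⟨f, hf, -, hmem⟩ := hB _ h₁ _ h₂ a (by simp [chi, hab, hac, had])
  have hfbc : f = b ∨ f = c := by
    by_contra! hne
    simp only [Pi.add_apply, Pi.sub_apply, chi, if_neg hne.1, if_neg hne.2] at hf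
    split_ifs at hf <;> omega
  rcases hfbc with rfl | rfl
  · rwa [show x + chi c - chi d + chi a - chi f = x + chi a - chi f + chi c - chi d by abel] at hmem
  · rw [show x + chi f - chi d + chi a - chi f = x + chi a - chi d by abel] at hmem
    exact absurd hmem hnot

lemma MConvex.exchange_or_exchange (hB : MConvex B) {x : E → ℤ} {a b c d : E} (hx : x ∈ B)
    (h : x + chi a - chi b + chi c - chi d ∈ B) (hab : a ≠ b) (hac : a ≠ c) (had : a ≠ d) :
    x + chi c - chi d ∈ B ∨ x + chi a - chi d ∈ B := by
  obtain ⟨f, hf, hmem, hmem'⟩ := hB _ h _ hx a (by simp [chi, hab, hac, had])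
  have hfbd : f = b ∨ f = d := by
    by_contra! hne
    simp only [Pi.add_apply, Pi.sub_apply, chi, if_neg hne.1, if_neg hne.2] at hf
    split_ifs at hf <;> omega
  rcases hfbd with rfl | rfl
  · left
    rwa [show x + chi a - chi f + chi c - chi d - chi a + chi f = x + chi c - chi d by abel] at hmem
  · exact Or.inr hmem'

lemma MConvex.add_sum_exchange_mem (hB : MConvex B) {a : ℕ → E} {k : ℕ}
    (ha : Set.InjOn a (Set.Iic k)) {J : Finset ℕ} (hJ : J ⊆ range k) {x : E → ℤ} (hx : x ∈ B)
    (harc : ∀ j ∈ J, x + chi (a j) - chi (a (j + 1)) ∈ B)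
    (hshort : ∀ j ∈ J, ∀ l ∈ J, j < l → x + chi (a j) - chi (a (l + 1)) ∉ B) :
    x + ∑ j ∈ J, (chi (a j) - chi (a (j + 1))) ∈ B := by
  have hne : ∀ {j l}, j ≤ k → l ≤ k → j ≠ l → a j ≠ a l := fun hj hl hjl h => hjl (ha hj hl h)
  induction J using Finset.induction_on_min generalizing x with
  | empty => simpa using hx
  | insert j₀ J hmin ih =>
    have hJk : ∀ j ∈ insert j₀ J, j < k := fun j hj => mem_range.1 (hJ hj)
    have hj₀k := hJk j₀ (mem_insert_self _ _)
    have harc₀ := harc j₀ (mem_insert_self _ _)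
    -- `j₀ + 1 ∈ J` would make `a j₀ → a (j₀ + 2)` a shortcut
    have hgap : ∀ j ∈ J, j₀ + 2 ≤ j := by
      intro j hj
      have hjk := hJk j (mem_insert_of_mem hj)
      by_contra hlt
      obtain rfl : j = j₀ + 1 := by have := hmin j hj; omega
      exact hshort j₀ (mem_insert_self _ _) _ (mem_insert_of_mem hj) (by omega)
        (hB.exchange_trans harc₀ (harc _ (mem_insert_of_mem hj))
          (hne (by omega) (by omega) (by omega)) (hne (by omega) (by omega) (by omega)))
    rw [sum_insert fun h => by have := hmin _ h; omega,
      show ∀ s : E → ℤ, x + (chi (a j₀) - chi (a (j₀ + 1)) + s)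
        = x + chi (a j₀) - chi (a (j₀ + 1)) + s from fun s => by abel]
    refine ih ((subset_insert _ _).trans hJ) harc₀ (fun j hj => ?_) (fun j hj l hl hjl hmem => ?_)
    · have hjk := hJk j (mem_insert_of_mem hj)
      have := hgap j hj
      exact hB.exchange_add_exchange harc₀ (harc j (mem_insert_of_mem hj))
        (hne (by omega) (by omega) (by omega)) (hne (by omega) (by omega) (by omega))
        (hne (by omega) (by omega) (by omega))
        (hshort j₀ (mem_insert_self _ _) j (mem_insert_of_mem hj) (by omega))
    · have hlk := hJk l (mem_insert_of_mem hl)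
      have := hgap j hj
      rcases hB.exchange_or_exchange hx hmem (hne (by omega) (by omega) (by omega))
          (hne (by omega) (by omega) (by omega)) (hne (by omega) (by omega) (by omega)) with h | h
      · exact hshort j (mem_insert_of_mem hj) l (mem_insert_of_mem hl) hjl h
      · exact hshort j₀ (mem_insert_self _ _) l (mem_insert_of_mem hl) (by omega) h

end Exchange

section ExchangeWalk

variable {E : Type*} [DecidableEq E] {N : Type*} {B : N → Set (E → ℤ)} {z : N → E → ℤ}

def IsExchangeWalk (B : N → Set (E → ℤ)) (z : N → E → ℤ) (a : ℕ → E) (k : ℕ) : Prop :=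
  ∀ j < k, ∃ i, z i + chi (a j) - chi (a (j + 1)) ∈ B i

lemma IsExchangeWalk.snoc {a : ℕ → E} {k : ℕ} {g : E} (hw : IsExchangeWalk B z a k)
    (harc : ∃ i, z i + chi (a k) - chi g ∈ B i) :
    IsExchangeWalk B z (fun m => if m ≤ k then a m else g) (k + 1) := by
  intro j hj
  rcases Nat.lt_succ_iff_lt_or_eq.1 hj with hj | rfl
  · simpa [hj.le, Nat.succ_le_of_lt hj] using hw j hj
  · simpa using harc

lemma IsExchangeWalk.shortcut {a : ℕ → E} {k j l : ℕ} (hw : IsExchangeWalk B z a k)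
    (hjl : j < l) (hlk : l ≤ k) (harc : ∃ i, z i + chi (a j) - chi (a l) ∈ B i) :
    IsExchangeWalk B z (fun m => if m ≤ j then a m else a (m + (l - j - 1))) (k - (l - j - 1)) := by
  intro m hm
  rcases lt_trichotomy m j with h | rfl | h
  · simpa [h.le, Nat.succ_le_of_lt h] using hw m (by omega)
  · simpa [show m + 1 + (l - m - 1) = l by omega] using harc
  · simpa [show ¬m ≤ j by omega, show ¬m + 1 ≤ j by omega,
      show m + 1 + (l - j - 1) = m + (l - j - 1) + 1 by omega] using hw _ (by omega)

variable [Fintype N]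

theorem IsExchangeWalk.exists_augment (hB : ∀ i, MConvex (B i)) (hz : ∀ i, z i ∈ B i)
    {a : ℕ → E} {k : ℕ} (hw : IsExchangeWalk B z a k) (ha : Set.InjOn a (Set.Iic k))
    (hshort : ∀ j l, j + 2 ≤ l → l ≤ k → ∀ i, z i + chi (a j) - chi (a l) ∉ B i) :
    ∃ z' : N → E → ℤ, (∀ i, z' i ∈ B i) ∧ ∑ i, z' i = ∑ i, z i + chi (a 0) - chi (a k) := by
  let : DecidableEq N := Classical.decEq N
  rcases Nat.eq_zero_or_pos k with rfl | hk
  · exact ⟨z, hz, by simp⟩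
  have : Nonempty N := let ⟨i, _⟩ := hw 0 hk; ⟨i⟩
  choose! buyer hbuyer using hw
  refine ⟨fun i => z i + ∑ j ∈ range k with buyer j = i, (chi (a j) - chi (a (j + 1))),
    fun i => (hB i).add_sum_exchange_mem ha (filter_subset _ _) (hz i) ?_ ?_, ?_⟩
  · intro j hj
    obtain ⟨hjk, rfl⟩ := mem_filter.1 hj
    exact hbuyer j (mem_range.1 hjk)
  · intro j _ l hl hjl
    exact hshort j (l + 1) (by omega) (mem_range.1 (mem_filter.1 hl).1) i
  · rw [sum_add_distrib, sum_fiberwise, sum_range_sub' (fun j => chi (a j))]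
    abel

def IsAugmentingWalk (b : E → ℤ) (B : N → Set (E → ℤ)) (z : N → E → ℤ) (a : ℕ → E) (k : ℕ) :
    Prop :=
  ∑ i, z i (a 0) < b (a 0) ∧ b (a k) < ∑ i, z i (a k) ∧ IsExchangeWalk B z a k

variable {b : E → ℤ} {a : ℕ → E} {k : ℕ}

lemma IsAugmentingWalk.shortcut (hw : IsAugmentingWalk b B z a k) {j l : ℕ} (hjl : j < l)
    (hlk : l ≤ k) (harc : ∃ i, z i + chi (a j) - chi (a l) ∈ B i) :
    IsAugmentingWalk b B z (fun m => if m ≤ j then a m else a (m + (l - j - 1)))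
      (k - (l - j - 1)) := by
  refine ⟨by simpa using hw.1, ?_, hw.2.2.shortcut hjl hlk harc⟩
  simpa [show ¬k - (l - j - 1) ≤ j by omega, show k - (l - j - 1) + (l - j - 1) = k by omega]
    using hw.2.1

lemma IsAugmentingWalk.exchange_notMem_of_minimal (hw : IsAugmentingWalk b B z a k)
    (hmin : ∀ a' k', IsAugmentingWalk b B z a' k' → k ≤ k') {j l : ℕ} (hjl : j + 2 ≤ l)
    (hlk : l ≤ k) (i : N) : z i + chi (a j) - chi (a l) ∉ B i := fun h =>
  absurd (hmin _ _ (hw.shortcut (by omega) hlk ⟨i, h⟩)) (by omega)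

lemma IsAugmentingWalk.injOn_of_minimal (hw : IsAugmentingWalk b B z a k)
    (hmin : ∀ a' k', IsAugmentingWalk b B z a' k' → k ≤ k') : Set.InjOn a (Set.Iic k) := by
  have key : ∀ j l, j < l → l ≤ k → a j ≠ a l := by
    intro j l hjl hlk hajl
    rcases hlk.lt_or_eq with hlk | rfl
    · obtain ⟨i, hi⟩ := hw.2.2 l hlk
      have := hmin _ _ (hw.shortcut (j := j) (l := l + 1) (by omega) hlk ⟨i, hajl ▸ hi⟩)
      omega
    · have := hmin a j ⟨hw.1, hajl ▸ hw.2.1, fun m hm => hw.2.2 m (by omega)⟩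
      omega
  intro j hj l hl h
  rcases lt_trichotomy j l with hjl | rfl | hjl
  · exact absurd h (key j l hjl hl)
  · rfl
  · exact absurd h.symm (key l j hjl hj)

end ExchangeWalk

lemma sum_natAbs_sub_chi_add_chi_lt_s6 {y z : E → ℤ} {e f : E} (he : z e < y e) (hf : y f < z f) :
    ∑ g, ((y - chi e + chi f) g - z g).natAbs < ∑ g, (y g - z g).natAbs := by
  refine sum_lt_sum (fun g _ => ?_) ⟨e, mem_univ e, ?_⟩ <;>
    simp only [Pi.add_apply, Pi.sub_apply, chi] <;> split_ifs <;> subst_vars <;> omega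

lemma MConvex.sum_le_of_exchange_closed {B : Set (E → ℤ)} (hB : MConvex B) {z : E → ℤ}
    (hz : z ∈ B) {A : Finset E} (hA : ∀ g ∈ A, ∀ f, z + chi g - chi f ∈ B → f ∈ A)
    {y : E → ℤ} (hy : y ∈ B) : ∑ e ∈ A, y e ≤ ∑ e ∈ A, z e := by
  induction hd : ∑ g, (y g - z g).natAbs using Nat.strong_induction_on generalizing y with
  | _ d ih =>
  by_contra! hlt
  obtain ⟨g, hgA, hg⟩ : ∃ g ∈ A, z g < y g := by
    by_contra! hle
    exact (sum_le_sum hle).not_gt hlt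
  obtain ⟨f, hf, hy', hz'⟩ := hB y hy z hz g hg
  have := ih _ (hd ▸ sum_natAbs_sub_chi_add_chi_lt_s6 hg hf) hy' rfl
  rw [sum_sub_chi_add_chi y hgA (hA g hgA f hz')] at this
  exact this.not_gt hlt

section Covering

variable {N : Type*} [Fintype N]

def deficit (b : E → ℤ) (z : N → E → ℤ) : ℕ := ∑ e, (b e - ∑ i, z i e).toNat

lemma deficit_lt_of_sum_eq {b : E → ℤ} {z z' : N → E → ℤ} {e f : E} (he : ∑ i, z i e < b e)
    (hf : b f < ∑ i, z i f) (hsum : ∑ i, z' i = ∑ i, z i + chi e - chi f) :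
    deficit b z' < deficit b z := by
  have hz' : ∀ g, ∑ i, z' i g = ∑ i, z i g + chi e g - chi f g := fun g => by
    simpa [Finset.sum_apply] using congrFun hsum g
  refine sum_lt_sum (fun g _ => ?_) ⟨e, mem_univ e, ?_⟩
  · rw [hz' g]; simp only [chi]; split_ifs <;> subst_vars <;> omega
  · rw [hz' e]; simp only [chi]; split_ifs <;> subst_vars <;> omega

variable {B : N → Set (E → ℤ)} {ρ : N → Finset E → ℤ} {b : E → ℤ}

lemma exists_deficit_lt (hB : ∀ i, MConvex (B i)) (hρ : ∀ i, IsRank (B i) (ρ i))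
    (hcond : ∀ S : Finset E, ∑ e ∈ S, b e ≤ ∑ i, ρ i S) {z : N → E → ℤ} (hz : ∀ i, z i ∈ B i)
    {e₀ : E} (he₀ : ∑ i, z i e₀ < b e₀) :
    ∃ z' : N → E → ℤ, (∀ i, z' i ∈ B i) ∧ deficit b z' < deficit b z := by
  classical
  by_cases haug : ∃ k a, IsAugmentingWalk b B z a k
  · obtain ⟨a, ha⟩ := Nat.find_spec haug
    have hmin : ∀ a' k', IsAugmentingWalk b B z a' k' → Nat.find haug ≤ k' :=
      fun a' k' h => Nat.find_min' haug ⟨a', h⟩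
    obtain ⟨z', hz', hsum⟩ := ha.2.2.exists_augment hB hz (ha.injOn_of_minimal hmin)
      fun j l hjl hlk => ha.exchange_notMem_of_minimal hmin hjl hlk
    exact ⟨z', hz', deficit_lt_of_sum_eq ha.1 ha.2.1 hsum⟩
  -- otherwise the items reachable from a deficit item form an underdemanded set
  exfalso
  simp only [not_exists] at haug
  let A := univ.filter fun f => ∃ k a, ∑ i, z i (a 0) < b (a 0) ∧ a k = f ∧ IsExchangeWalk B z a k
  have hclosed : ∀ i, ∀ g ∈ A, ∀ f, z i + chi g - chi f ∈ B i → f ∈ A := by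
    intro i g hg f hf
    obtain ⟨k, a, h0, rfl, hw⟩ := (mem_filter.1 hg).2
    exact mem_filter.2 ⟨mem_univ _, k + 1, _, by simpa using h0, by simp, hw.snoc ⟨i, hf⟩⟩
  have hsupply : ∀ f ∈ A, ∑ i, z i f ≤ b f := by
    intro f hf
    obtain ⟨k, a, h0, rfl, hw⟩ := (mem_filter.1 hf).2
    by_contra! h
    exact haug k a ⟨h0, h, hw⟩
  have he₀A : e₀ ∈ A :=
    mem_filter.2 ⟨mem_univ _, 0, fun _ => e₀, he₀, rfl, fun j hj => absurd hj j.not_lt_zero⟩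
  have hrank : ∀ i, ρ i A ≤ ∑ e ∈ A, z i e := by
    intro i
    obtain ⟨y, hy, hyA⟩ := (hρ i A).1
    exact hyA ▸ (hB i).sum_le_of_exchange_closed (hz i) (hclosed i) hy
  have hlt : ∑ e ∈ A, ∑ i, z i e < ∑ e ∈ A, b e := sum_lt_sum hsupply ⟨e₀, he₀A, he₀⟩
  have hle : ∑ i, ρ i A ≤ ∑ e ∈ A, ∑ i, z i e := (sum_le_sum fun i _ => hrank i).trans_eq sum_comm
  exact (hcond A).not_gt (hle.trans_lt hlt)

theorem exists_covering_of_isRank (hB : ∀ i, MConvex (B i)) (hρ : ∀ i, IsRank (B i) (ρ i))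
    (hcond : ∀ S : Finset E, ∑ e ∈ S, b e ≤ ∑ i, ρ i S) :
    ∃ z : N → E → ℤ, (∀ i, z i ∈ B i) ∧ ∀ e, b e ≤ ∑ i, z i e := by
  classical
  choose z₀ hz₀ _ using fun i => (hρ i ∅).1
  have hex : ∃ n, ∃ z : N → E → ℤ, (∀ i, z i ∈ B i) ∧ deficit b z = n := ⟨_, z₀, hz₀, rfl⟩
  obtain ⟨z, hz, hzmin⟩ := Nat.find_spec hex
  refine ⟨z, hz, fun e => ?_⟩
  by_contra! he
  obtain ⟨z', hz', hlt⟩ := exists_deficit_lt hB hρ hcond hz he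
  exact Nat.find_min hex (hzmin ▸ hlt) ⟨z', hz', rfl⟩

end Covering

section Utility

variable {E : Type*} [Fintype E] {b : E → ℤ} {v : (E → ℤ) → ℤ} {p : E → ℝ}

lemma util_add_util_le {x y x' y' : E → ℤ} (hsum : x' + y' = x + y)
    (hv : v x + v y ≤ v x' + v y') : util v p x + util v p y ≤ util v p x' + util v p y' := by
  have hprice : ∑ e, p e * (x' e : ℝ) + ∑ e, p e * (y' e : ℝ)
      = ∑ e, p e * (x e : ℝ) + ∑ e, p e * (y e : ℝ) := by
    simp only [← sum_add_distrib, ← mul_add]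
    refine sum_congr rfl fun e _ => ?_
    exact_mod_cast congrArg (fun t : ℤ => p e * (t : ℝ)) (congrFun hsum e)
  have hv' : (v x : ℝ) + v y ≤ v x' + v y' := by exact_mod_cast hv
  simp only [util]
  linarith

lemma mem_demand_of_exchange {x y x' y' : E → ℤ} (hx : x ∈ Demand b v p) (hy : y ∈ Demand b v p)
    (hx' : x' ∈ Box b) (hy' : y' ∈ Box b) (hsum : x' + y' = x + y)
    (hv : v x + v y ≤ v x' + v y') : x' ∈ Demand b v p ∧ y' ∈ Demand b v p := by
  have hu := util_add_util_le (p := p) hsum hv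
  have hx'u := hx.2 x' hx'
  have hy'u := hy.2 y' hy'
  exact ⟨⟨hx', fun w hw => (hx.2 w hw).trans (by linarith)⟩,
    ⟨hy', fun w hw => (hy.2 w hw).trans (by linarith)⟩⟩

end Utility

section Demand

lemma sum_add_chi (x : E → ℤ) (e : E) : ∑ g, (x + chi e) g = ∑ g, x g + 1 := by
  simp [sum_add_distrib, chi]

lemma demand_finite (b : E → ℤ) (v : (E → ℤ) → ℤ) (p : E → ℝ) : (Demand b v p).Finite :=
  (Set.finite_Icc 0 b).subset fun _ hz => ⟨fun e => (hz.1 e).1, fun e => (hz.1 e).2⟩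

variable {b : E → ℤ} {v : (E → ℤ) → ℤ} {p : E → ℝ}

lemma MNatConcave.demand_exchange (hv : MNatConcave b v) {x y : E → ℤ}
    (hx : x ∈ Demand b v p) (hy : y ∈ Demand b v p) {e : E} (h : y e < x e) :
    (x - chi e ∈ Demand b v p ∧ y + chi e ∈ Demand b v p) ∨
    ∃ f, x f < y f ∧ x - chi e + chi f ∈ Demand b v p ∧ y + chi e - chi f ∈ Demand b v p := by
  have hxe := sub_chi_mem_box hx.1 (e := e) (by linarith [(hy.1 e).1])
  have hye := add_chi_mem_box hy.1 (e := e) (by linarith [(hx.1 e).2])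
  rcases hv x hx.1 y hy.1 e h with hval | ⟨f, hf, hval⟩
  · exact Or.inl (mem_demand_of_exchange hx hy hxe hye (by abel) hval)
  · have hfe : f ≠ e := by rintro rfl; omega
    refine Or.inr ⟨f, hf, mem_demand_of_exchange hx hy ?_ ?_ (by abel) hval⟩
    · refine add_chi_mem_box hxe ?_
      simp only [Pi.sub_apply, chi_of_ne hfe, sub_zero]
      linarith [(hy.1 f).2]
    · refine sub_chi_mem_box hye ?_
      simp only [Pi.add_apply, chi_of_ne hfe, add_zero]
      linarith [(hx.1 f).1]

lemma MNatConcave.exists_add_chi_mem_demand (hv : MNatConcave b v) {y z : E → ℤ}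
    (hy : y ∈ Demand b v p) (hz : z ∈ Demand b v p) (h : ∑ e, z e < ∑ e, y e) :
    ∃ e, z + chi e ∈ Demand b v p := by
  induction hd : ∑ g, (y g - z g).natAbs using Nat.strong_induction_on generalizing y with
  | _ d ih =>
  obtain ⟨e, he⟩ : ∃ e, z e < y e := by
    by_contra! hle
    exact (sum_le_sum fun e _ => hle e).not_gt h
  rcases hv.demand_exchange hy hz he with ⟨-, hze⟩ | ⟨f, hf, hye, -⟩
  · exact ⟨e, hze⟩
  · exact ih _ (hd ▸ sum_natAbs_sub_chi_add_chi_lt_s6 he hf) hye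
      (by rwa [sum_sub_chi_add_chi y (mem_univ e) (mem_univ f)]) rfl

lemma MNatConcave.mem_maxDemand_iff (hv : MNatConcave b v) {w : E → ℤ} :
    w ∈ MaxDemand b v p ↔ w ∈ Demand b v p ∧ ∀ y ∈ Demand b v p, ∑ e, y e ≤ ∑ e, w e := by
  refine ⟨fun hw => ⟨hw.1, fun y hy => ?_⟩, fun hw => ⟨hw.1, fun y hy hwy => ?_⟩⟩
  · by_contra! hlt
    obtain ⟨e, he⟩ := hv.exists_add_chi_mem_demand hy hw.1 hlt
    have hle : w ≤ w + chi e := fun g => by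
      simp only [Pi.add_apply, chi, le_add_iff_nonneg_right]
      split_ifs <;> omega
    simpa using congrFun (hw.2 _ he hle) e
  · have hsum : ∑ e, w e = ∑ e, y e := le_antisymm (sum_le_sum fun e _ => hwy e) (hw.2 y hy)
    exact funext fun e => ((sum_eq_sum_iff_of_le fun e _ => hwy e).1 hsum e (mem_univ e)).symm

lemma MNatConcave.mconvex_maxDemand (hv : MNatConcave b v) : MConvex (MaxDemand b v p) := by
  intro x hx y hy e h
  simp only [hv.mem_maxDemand_iff] at hx hy ⊢
  rcases hv.demand_exchange hx.1 hy.1 h with ⟨-, hye⟩ | ⟨f, hf, hxf, hyf⟩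
  · have := hy.2 _ hye
    rw [sum_add_chi] at this
    omega
  · have hyf' : y + chi e - chi f = y - chi f + chi e := by abel
    refine ⟨f, hf, ⟨hxf, ?_⟩, ⟨hyf, ?_⟩⟩
    · rw [sum_sub_chi_add_chi x (mem_univ e) (mem_univ f)]; exact hx.2
    · rw [hyf', sum_sub_chi_add_chi y (mem_univ f) (mem_univ e)]; exact hy.2

lemma exists_mem_maxDemand_ge {z : E → ℤ} (hz : z ∈ Demand b v p) :
    ∃ w ∈ MaxDemand b v p, z ≤ w := by
  have hfin := demand_finite b v p
  obtain ⟨w, hzw, hw, hmax⟩ := hfin.toFinset.exists_le_maximal (hfin.mem_toFinset.2 hz)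
  rw [Set.Finite.mem_toFinset] at hw
  exact ⟨w, ⟨hw, fun y hy hwy => le_antisymm (hmax (hfin.mem_toFinset.2 hy) hwy) hwy⟩, hzw⟩

end Demand

theorem stmt6_general {N : Type*} [Fintype N] (b : E → ℤ)
    (v : N → (E → ℤ) → ℤ) (hsgs : ∀ i, MNatConcave b (v i))
    (p : E → ℝ)
    (ρ : N → Finset E → ℤ) (hρ : ∀ i, IsRank (MaxDemand b (v i) p) (ρ i)) :
    Covering b v p ↔
      ∀ S : Finset E, ∑ e ∈ S, b e ≤ ∑ i, ρ i S := by
  constructor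
  · rintro ⟨z, hz, hcov⟩ S
    choose w hw hzw using fun i => exists_mem_maxDemand_ge (hz i)
    calc ∑ e ∈ S, b e ≤ ∑ e ∈ S, ∑ i, z i e := sum_le_sum fun e _ => hcov e
      _ = ∑ i, ∑ e ∈ S, z i e := sum_comm
      _ ≤ ∑ i, ∑ e ∈ S, w i e := sum_le_sum fun i _ => sum_le_sum fun e _ => hzw i e
      _ ≤ ∑ i, ρ i S := sum_le_sum fun i _ => (hρ i S).2 ⟨w i, hw i, rfl⟩
  · intro hcond
    obtain ⟨z, hz, hcov⟩ :=
      exists_covering_of_isRank (fun i => (hsgs i).mconvex_maxDemand) hρ hcond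
    exact ⟨z, fun i => (hz i).1, hcov⟩

/-- With strong gross substitutes valuations, prices are covering iff no set is
underdemanded: `b(S) ≤ Σ_i ρ̂_i(S)` for all `S`. -/
theorem stmt6 {N : Type*} [Fintype N] (b : E → ℤ) (hb : 0 ≤ b)
    (v : N → (E → ℤ) → ℤ) (hsgs : ∀ i, MNatConcave b (v i))
    (hmono : ∀ i, ∀ x ∈ Box b, ∀ y ∈ Box b, x ≤ y → v i x ≤ v i y)
    (p : E → ℝ) (hp : 0 ≤ p)
    (ρ : N → Finset E → ℤ) (hρ : ∀ i, IsRank (MaxDemand b (v i) p) (ρ i)) :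
    Covering b v p ↔
      ∀ S : Finset E, ∑ e ∈ S, b e ≤ ∑ i, ρ i S :=
  stmt6_general b v hsgs p ρ hρ
end

section
/- The level invariants of the push-relabel algorithm for polymatroid sum are maintained: if Θ: E → {0,…,m} satisfies (L1) Θ(e) = 0 for every oversold item e, and (L2) min_{f ∈ T_i(e)} Θ(f) ≥ Θ(e) − 1 for all buyers i and items e, then both invariants still hold after a push operation (replacing z_i by z_i − αχ_f + αχ_e with f ∈ T_i(e), Θ(f) = Θ(e) − 1, and α = min{b(e) − Σ_ℓ z_ℓ(e), w_i(e,f)}) and after a relabel operation (increasing Θ(e) by 1 for an undersold item e for which no push is possible). -/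
/-! The exchange property makes the tight sets of `z` closed under union: if `S ∪ S'` were not
tight, an exchange between `z` and a maximiser `y` of `y(S ∪ S')` stays inside `S ∪ S'` (a tight
set containing the item leaving `y` contains the one entering it) and moves `y` strictly closer
to `z` in `ℓ¹`, so a closest maximiser gives a contradiction. After a push from `f ∈ T_i(e)` to
`e` the set `T_i(g) ∪ T_i(e)` stays tight, and so does `T_i(g)` when `f ∉ T_i(g)`; hence
`T'_i(g) ⊆ T_i(g)`, or `T'_i(g) ⊆ T_i(g) ∪ T_i(e)` and `Θ(g) ≤ Θ(f) + 1 = Θ(e)`. -/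

open Finset

variable {E : Type*} [Fintype E] [DecidableEq E]

/-- `T` assigns to each item `e` the unique inclusion-wise minimal tight set containing `e`. -/
def MinTightAt (ρ : Finset E → ℤ) (z : E → ℤ) (T : E → Finset E) : Prop :=
  ∀ e, e ∈ T e ∧ Tight ρ z (T e) ∧ ∀ S, e ∈ S → Tight ρ z S → T e ⊆ S

/-- Level invariant (L1): oversold items have level 0. -/
def LevelInv1 {N : Type*} [Fintype N] (b : E → ℤ) (z : N → E → ℤ) (Θ : E → ℤ) : Prop :=
  ∀ e, b e < ∑ i, z i e → Θ e = 0

/-- Level invariant (L2): `min_{f ∈ T_i(e)} Θ(f) ≥ Θ(e) − 1`. -/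
def LevelInv2 {N : Type*} (Θ : E → ℤ) (T : N → E → Finset E) : Prop :=
  ∀ (i : N) (e : E), ∀ f ∈ T i e, Θ e - 1 ≤ Θ f

lemma sum_le_rank {α : Type*} {B : Set (α → ℤ)} {ρ : Finset α → ℤ} (hρ : IsRank B ρ)
    {y : α → ℤ} (hy : y ∈ B) (S : Finset α) : ∑ g ∈ S, y g ≤ ρ S :=
  (hρ S).2 ⟨y, hy, rfl⟩

lemma MinTightAt.unique {α : Type*} {ρ : Finset α → ℤ} {z : α → ℤ} {T T' : α → Finset α}
    (h : MinTightAt ρ z T) (h' : MinTightAt ρ z T') : T = T' :=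
  funext fun e => ((h e).2.2 _ (h' e).1 (h' e).2.1).antisymm ((h' e).2.2 _ (h e).1 (h e).2.1)

section Exchange

variable {α : Type*} [DecidableEq α] {B : Set (α → ℤ)} {ρ : Finset α → ℤ}

lemma shift_apply (y : α → ℤ) (a : ℤ) (e f g : α) :
    (y - a • chi f + a • chi e) g
      = y g - (if g = f then a else 0) + (if g = e then a else 0) := by
  simp [chi]

lemma sum_shift (y : α → ℤ) (a : ℤ) (e f : α) (S : Finset α) :
    ∑ g ∈ S, (y - a • chi f + a • chi e) g
      = ∑ g ∈ S, y g - (if f ∈ S then a else 0) + (if e ∈ S then a else 0) := by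
  simp [chi, sum_add_distrib, sum_sub_distrib, mul_ite]

lemma shift_self (y : α → ℤ) (a : ℤ) (e : α) : y - a • chi e + a • chi e = y :=
  sub_add_cancel y _

lemma add_chi_sub_chi_eq_shift (y : α → ℤ) (e f : α) :
    y + chi e - chi f = y - (1 : ℤ) • chi f + (1 : ℤ) • chi e := by
  simp only [one_smul]; abel

lemma sub_chi_add_chi_eq_shift (y : α → ℤ) (e f : α) :
    y - chi e + chi f = y - (1 : ℤ) • chi e + (1 : ℤ) • chi f := by
  simp only [one_smul]

lemma mem_of_tight_of_add_chi_sub_chi_mem (hρ : IsRank B ρ) {z : α → ℤ} {e f : α}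
    (hzef : z + chi e - chi f ∈ B) {W : Finset α} (hW : Tight ρ z W) (he : e ∈ W) : f ∈ W := by
  by_contra hf
  have := sum_le_rank hρ hzef W
  rw [add_chi_sub_chi_eq_shift, sum_shift, if_neg hf, if_pos he] at this
  unfold Tight at hW
  omega

lemma natAbs_sub_chi_add_chi_sub_le {y z : α → ℤ} {e f : α} (he : z e < y e) (hf : y f < z f)
    (g : α) : ((y - chi e + chi f) g - z g).natAbs ≤ (y g - z g).natAbs := by
  rw [sub_chi_add_chi_eq_shift, shift_apply]
  split_ifs <;> subst_vars <;> omega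

lemma sum_natAbs_sub_chi_add_chi_sub_lt [Fintype α] {y z : α → ℤ} {e f : α} (he : z e < y e)
    (hf : y f < z f) :
    ∑ g, ((y - chi e + chi f) g - z g).natAbs < ∑ g, (y g - z g).natAbs := by
  refine sum_lt_sum (fun g _ => natAbs_sub_chi_add_chi_sub_le he hf g) ⟨e, mem_univ e, ?_⟩
  have hef : e ≠ f := by rintro rfl; omega
  rw [sub_chi_add_chi_eq_shift, shift_apply, if_neg hef]
  simp only [if_true]
  omega

lemma Tight.union [Fintype α] (hM : MConvex B) (hρ : IsRank B ρ) {z : α → ℤ} (hz : z ∈ B)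
    {S S' : Finset α} (hS : Tight ρ z S) (hS' : Tight ρ z S') : Tight ρ z (S ∪ S') := by
  set U := S ∪ S'
  obtain ⟨y, ⟨hyB, hyU⟩, hmin⟩ :=
    (measure fun y : α → ℤ => ∑ g, (y g - z g).natAbs).wf.has_min
      {y | y ∈ B ∧ ∑ g ∈ U, y g = ρ U} (hρ U).1
  by_contra hU
  obtain ⟨e, heU, he⟩ : ∃ e ∈ U, z e < y e :=
    exists_lt_of_sum_lt (hyU ▸ lt_of_le_of_ne (sum_le_rank hρ hz U) hU)
  obtain ⟨f, hf, hyB', hzB'⟩ := hM y hyB z hz e he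
  have hfU : f ∈ U := by
    rcases mem_union.1 heU with h | h
    · exact mem_union_left _ (mem_of_tight_of_add_chi_sub_chi_mem hρ hzB' hS h)
    · exact mem_union_right _ (mem_of_tight_of_add_chi_sub_chi_mem hρ hzB' hS' h)
  refine hmin _ ⟨hyB', ?_⟩ (sum_natAbs_sub_chi_add_chi_sub_lt he hf)
  rw [sub_chi_add_chi_eq_shift, sum_shift, if_pos heU, if_pos hfU, sub_add_cancel, hyU]

lemma shift_sub_one_mem (hM : MConvex B) {z : α → ℤ} (hz : z ∈ B) {e f : α} (hef : e ≠ f)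
    {k : ℤ} (hk : 0 < k) (hzk : z - k • chi f + k • chi e ∈ B) :
    z - (k - 1) • chi f + (k - 1) • chi e ∈ B := by
  obtain ⟨f', hf', hmem, -⟩ := hM _ hzk z hz e (by rw [shift_apply]; simp [hef]; omega)
  obtain rfl : f' = f := by
    by_contra hne
    rw [shift_apply, if_neg hne] at hf'
    split_ifs at hf' <;> omega
  convert hmem using 1
  funext g
  simp only [chi, Pi.add_apply, Pi.sub_apply, Pi.smul_apply, smul_eq_mul]
  ring

lemma shift_mem_of_le (hM : MConvex B) {z : α → ℤ} (hz : z ∈ B) {e f : α} {w a : ℤ}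
    (hw : z - w • chi f + w • chi e ∈ B) (ha : 0 ≤ a) (haw : a ≤ w) :
    z - a • chi f + a • chi e ∈ B := by
  obtain rfl | hef := eq_or_ne e f
  · rwa [shift_self]
  induction a, haw using Int.leInductionDown with
  | base => exact hw
  | pred k _ ih => exact shift_sub_one_mem hM hz hef (by omega) (ih (by omega))

end Exchange

section Push

variable {α : Type*} [DecidableEq α] {B : Set (α → ℤ)} {ρ : Finset α → ℤ}

lemma Tight.shift_of_mem {z : α → ℤ} {S : Finset α} (hS : Tight ρ z S) {e f : α} (he : e ∈ S)
    (hf : f ∈ S) (a : ℤ) : Tight ρ (z - a • chi f + a • chi e) S := by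
  unfold Tight at *
  rw [sum_shift, if_pos hf, if_pos he, sub_add_cancel, hS]

lemma Tight.shift_of_notMem (hρ : IsRank B ρ) {z : α → ℤ} {S : Finset α} (hS : Tight ρ z S)
    {e f : α} {a : ℤ} (hf : f ∉ S) (ha : 0 ≤ a) (hz' : z - a • chi f + a • chi e ∈ B) :
    Tight ρ (z - a • chi f + a • chi e) S := by
  have := sum_le_rank hρ hz' S
  unfold Tight at *
  rw [sum_shift, if_neg hf] at this ⊢
  split_ifs at this ⊢ <;> omega

lemma levelInv2_shift [Fintype α] (hM : MConvex B) (hρ : IsRank B ρ) {z : α → ℤ} (hz : z ∈ B)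
    {T : α → Finset α} (hT : MinTightAt ρ z T) {e f : α} (hf : f ∈ T e) {a : ℤ} (ha : 0 ≤ a)
    (hz' : z - a • chi f + a • chi e ∈ B) {T' : α → Finset α}
    (hT' : MinTightAt ρ (z - a • chi f + a • chi e) T') {Θ : α → ℤ}
    (h2 : ∀ g, ∀ h ∈ T g, Θ g - 1 ≤ Θ h) (hΘf : Θ f ≤ Θ e - 1) :
    ∀ g, ∀ h ∈ T' g, Θ g - 1 ≤ Θ h := by
  intro g h hh
  by_cases hfg : f ∈ T g
  · have hU := ((hT g).2.1.union hM hρ hz (hT e).2.1).shift_of_mem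
      (mem_union_right _ (hT e).1) (mem_union_right _ hf) a
    rcases mem_union.1 ((hT' g).2.2 _ (mem_union_left _ (hT g).1) hU hh) with h' | h'
    · exact h2 g h h'
    · linarith [h2 g f hfg, h2 e h h']
  · exact h2 g h ((hT' g).2.2 _ (hT g).1 ((hT g).2.1.shift_of_notMem hρ hfg ha hz') hh)

end Push

lemma sum_update_apply {α N : Type*} [Fintype N] [DecidableEq N] (z : N → α → ℤ) (i : N)
    (v : α → ℤ) (g : α) :
    ∑ j, Function.update z i v j g = ∑ j, z j g - z i g + v g := by
  rw [← Finset.sum_apply, sum_update_of_mem (mem_univ i), Pi.add_apply, Finset.sum_apply,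
    ← sum_erase_eq_sub (mem_univ i)]
  simp [sdiff_singleton_eq_erase, add_comm]

section LevelInvariants

variable {α N : Type*} [DecidableEq α]

lemma LevelInv1.push [Fintype N] [DecidableEq N] {b : α → ℤ} {z : N → α → ℤ} {Θ : α → ℤ}
    (h1 : LevelInv1 b z Θ) (i : N) {e f : α} {a : ℤ} (ha : 0 ≤ a)
    (hae : a ≤ b e - ∑ j, z j e) :
    LevelInv1 b (Function.update z i (z i - a • chi f + a • chi e)) Θ := by
  intro g hg
  rw [sum_update_apply, shift_apply] at hg
  by_cases hge : g = e
  · subst hge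
    split_ifs at hg <;> omega
  · exact h1 g (by rw [if_neg hge] at hg; split_ifs at hg <;> omega)

lemma LevelInv2.push [Fintype α] [DecidableEq N] {B : N → Set (α → ℤ)}
    (hM : ∀ i, MConvex (B i)) {ρ : N → Finset α → ℤ} (hρ : ∀ i, IsRank (B i) (ρ i))
    {z : N → α → ℤ} (hz : ∀ i, z i ∈ B i)
    {T : N → α → Finset α} (hT : ∀ i, MinTightAt (ρ i) (z i) (T i)) {Θ : α → ℤ}
    (h2 : LevelInv2 Θ T) {i : N} {e f : α} (hf : f ∈ T i e) (hΘf : Θ f ≤ Θ e - 1) {a : ℤ}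
    (ha : 0 ≤ a) (hz' : z i - a • chi f + a • chi e ∈ B i) {T' : N → α → Finset α}
    (hT' : ∀ j, MinTightAt (ρ j) (Function.update z i (z i - a • chi f + a • chi e) j) (T' j)) :
    LevelInv2 Θ T' := by
  intro j
  obtain rfl | hj := eq_or_ne j i
  · exact levelInv2_shift (hM j) (hρ j) (hz j) (hT j) hf ha hz' (by simpa using hT' j) (h2 j)
      hΘf
  · rw [← (hT j).unique (show MinTightAt (ρ j) (z j) (T' j) by simpa [hj] using hT' j)]
    exact h2 j

lemma LevelInv1.relabel [Fintype N] {b : α → ℤ} {z : N → α → ℤ} {Θ : α → ℤ}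
    (h1 : LevelInv1 b z Θ) {e : α} (he : ∑ j, z j e < b e) :
    LevelInv1 b z (Function.update Θ e (Θ e + 1)) := by
  intro g hg
  obtain rfl | hge := eq_or_ne g e
  · omega
  · rw [Function.update_of_ne hge]
    exact h1 g hg

lemma LevelInv2.relabel {Θ : α → ℤ} {T : N → α → Finset α} (h2 : LevelInv2 Θ T) {e : α}
    (hpush : ∀ i, ∀ f ∈ T i e, Θ f ≠ Θ e - 1) :
    LevelInv2 (Function.update Θ e (Θ e + 1)) T := by
  intro i g h hh
  have := h2 i g h hh
  simp only [Function.update_apply]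
  split_ifs with hg hh' <;> subst_vars
  · omega
  · have := hpush i h hh
    omega
  · omega
  · omega

end LevelInvariants

theorem stmt9_general {N : Type*} [Fintype N] [DecidableEq N]
    (b : E → ℤ) (B : N → Set (E → ℤ))
    (hM : ∀ i, MConvex (B i))
    (ρ : N → Finset E → ℤ) (hρ : ∀ i, IsRank (B i) (ρ i))
    (z : N → E → ℤ) (hz : ∀ i, z i ∈ B i)
    (Θ : E → ℤ) (hΘ : ∀ e, 0 ≤ Θ e ∧ Θ e ≤ Fintype.card E)
    (T : N → E → Finset E) (hT : ∀ i, MinTightAt (ρ i) (z i) (T i))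
    (h1 : LevelInv1 b z Θ) (h2 : LevelInv2 Θ T) :
    -- a push operation maintains the invariants
    (∀ (i : N) (e f : E) (w : ℤ),
      f ∈ T i e → Θ f = Θ e - 1 → (∑ j, z j e) < b e →
      IsGreatest {α : ℤ | z i - α • chi f + α • chi e ∈ B i} w →
      ∀ z' : N → E → ℤ,
        z' = Function.update z i
          (z i - (min (b e - ∑ j, z j e) w) • chi f
               + (min (b e - ∑ j, z j e) w) • chi e) →
      ∀ T' : N → E → Finset E, (∀ j, MinTightAt (ρ j) (z' j) (T' j)) →
        LevelInv1 b z' Θ ∧ LevelInv2 Θ T') ∧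
    -- a relabel operation maintains the invariants
    (∀ e : E, (∑ j, z j e) < b e → Θ e < Fintype.card E →
      (∀ (i : N) (f : E), f ∈ T i e → Θ f ≠ Θ e - 1) →
      LevelInv1 b z (Function.update Θ e (Θ e + 1)) ∧
      LevelInv2 (Function.update Θ e (Θ e + 1)) T ∧
      (∀ g, 0 ≤ Function.update Θ e (Θ e + 1) g ∧
        Function.update Θ e (Θ e + 1) g ≤ Fintype.card E)) := by
  refine ⟨fun i e f w hf hΘf hlt hw z' hz' T' hT' => ?_, fun e hlt hcard hpush => ?_⟩
  · subst hz'
    have hw0 : 0 ≤ w :=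
      hw.2 (show z i - (0 : ℤ) • chi f + (0 : ℤ) • chi e ∈ B i by simpa using hz i)
    have ha : 0 ≤ min (b e - ∑ j, z j e) w := le_min (by omega) hw0
    have hmem := shift_mem_of_le (hM i) (hz i) hw.1 ha (min_le_right _ _)
    exact ⟨h1.push i ha (min_le_left _ _), h2.push hM hρ hz hT hf hΘf.le ha hmem hT'⟩
  · refine ⟨h1.relabel hlt, h2.relabel hpush, fun g => ?_⟩
    obtain rfl | hge := eq_or_ne g e
    · simp only [Function.update_self]
      have := (hΘ g).1
      omega
    · rw [Function.update_of_ne hge]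
      exact hΘ g

/-- The level invariants (L1) and (L2) of the push-relabel algorithm are
maintained by both push and relabel operations. -/
theorem stmt9 {N : Type*} [Fintype N] [DecidableEq N]
    (b : E → ℤ) (B : N → Set (E → ℤ))
    (hBox : ∀ i, B i ⊆ Box b) (hM : ∀ i, MConvex (B i))
    (ρ : N → Finset E → ℤ) (hρ : ∀ i, IsRank (B i) (ρ i))
    (z : N → E → ℤ) (hz : ∀ i, z i ∈ B i)
    (Θ : E → ℤ) (hΘ : ∀ e, 0 ≤ Θ e ∧ Θ e ≤ Fintype.card E)
    (T : N → E → Finset E) (hT : ∀ i, MinTightAt (ρ i) (z i) (T i))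
    (h1 : LevelInv1 b z Θ) (h2 : LevelInv2 Θ T) :
    -- a push operation maintains the invariants
    (∀ (i : N) (e f : E) (w : ℤ),
      f ∈ T i e → Θ f = Θ e - 1 → (∑ j, z j e) < b e →
      IsGreatest {α : ℤ | z i - α • chi f + α • chi e ∈ B i} w →
      ∀ z' : N → E → ℤ,
        z' = Function.update z i
          (z i - (min (b e - ∑ j, z j e) w) • chi f
               + (min (b e - ∑ j, z j e) w) • chi e) →
      ∀ T' : N → E → Finset E, (∀ j, MinTightAt (ρ j) (z' j) (T' j)) →
        LevelInv1 b z' Θ ∧ LevelInv2 Θ T') ∧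
    -- a relabel operation maintains the invariants
    (∀ e : E, (∑ j, z j e) < b e → Θ e < Fintype.card E →
      (∀ (i : N) (f : E), f ∈ T i e → Θ f ≠ Θ e - 1) →
      LevelInv1 b z (Function.update Θ e (Θ e + 1)) ∧
      LevelInv2 (Function.update Θ e (Θ e + 1)) T ∧
      (∀ g, 0 ≤ Function.update Θ e (Θ e + 1) g ∧
        Function.update Θ e (Θ e + 1) g ≤ Fintype.card E)) :=
  stmt9_general b B hM ρ hρ z hz Θ hΘ T hT h1 h2
end
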